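/- For n ≥ 3, the colon ideal I : xz of the join-meet ideal I = (y_i y_j − xz : 1 ≤ i < j ≤ n) of the diamond lattice D_{n+2} in S = K[x, y_1, …, y_n, z] equals the ideal (y_1 − y_n, y_2 − y_n, …, y_{n−1} − y_n, y_n² − xz), and y_1 − y_n, …, y_{n−1} − y_n, y_n² − xz is a regular sequence in S. -/

import Mathlib

open MvPolynomial

noncomputable def xP (K : Type*) [Field K] (n : ℕ) : MvPolynomial (Fin (n + 2)) K := X 0
noncomputable def zP (K : Type*) [Field K] (n : ℕ) : MvPolynomial (Fin (n + 2)) K :=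
  X (Fin.last (n + 1))
noncomputable def yP (K : Type*) [Field K] (n : ℕ) (i : Fin n) : MvPolynomial (Fin (n + 2)) K :=
  X i.succ.castSucc

/-- The join-meet ideal `I` of the diamond lattice `D_{n+2}`. -/
noncomputable def diamondIdeal (K : Type*) [Field K] (n : ℕ) :
    Ideal (MvPolynomial (Fin (n + 2)) K) :=
  Ideal.span {f | ∃ i j : Fin n, i < j ∧ f = yP K n i * yP K n j - xP K n * zP K n}

/-- Regular sequence (elementwise colon characterization). -/
def IsRegSeq {R : Type*} [CommRing R] {m : ℕ} (f : Fin m → R) : Prop :=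
  (∀ k : Fin m, ∀ s : R,
      f k * s ∈ Ideal.span (f '' {j | j < k}) → s ∈ Ideal.span (f '' {j | j < k})) ∧
    Ideal.span (Set.range f) ≠ ⊤

/-- The sequence `y_1 - y_n, …, y_{n-1} - y_n, y_n² - xz`. -/
noncomputable def colonSeq (K : Type*) [Field K] (n : ℕ) (hn : 1 ≤ n) :
    Fin n → MvPolynomial (Fin (n + 2)) K :=
  fun i =>
    if (i : ℕ) < n - 1 then yP K n i - yP K n ⟨n - 1, by omega⟩
    else yP K n ⟨n - 1, by omega⟩ ^ 2 - xP K n * zP K n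

/-!
Let `σ_k` be the substitution `y_j ↦ y_n` for `j < k`. It is idempotent, so its kernel is
generated by the `X v - σ_k v`, that is, by the first `k - 1` terms of the sequence. Since
`σ_k` fixes the `k`-th term `f_k ≠ 0` and `S` is a domain, `f_k s ∈ ker σ_k` forces
`σ_k s = 0`: this is regularity. For `k = n` the same substitution identifies the ideal `J` of
the whole sequence with `σ_n⁻¹ (F)`, where `F = y_n² - xz` is prime (it is linear in `x` with
coprime coefficients) and divides neither `x` nor `z`. As `I ⊆ J`, from `s xz ∈ I` we get
`F ∣ σ_n(s) xz`, hence `F ∣ σ_n(s)`, i.e. `s ∈ J`; conversely `J xz ⊆ I` by explicit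
identities.
-/

namespace MvPolynomial

variable {R τ : Type*} [CommRing R]

theorem sub_bind₁_mem_span_X_sub (σ : τ → MvPolynomial τ R) (p : MvPolynomial τ R) :
    p - bind₁ σ p ∈ Ideal.span (Set.range fun v => X v - σ v) := by
  induction p using MvPolynomial.induction_on with
  | C a => simp
  | add p q hp hq => simpa [sub_add_sub_comm] using add_mem hp hq
  | mul_X p v hp =>
    have key : p * X v - bind₁ σ (p * X v) = p * (X v - σ v) + (p - bind₁ σ p) * σ v := by
      rw [map_mul, bind₁_X_right]; ring
    rw [key]
    exact add_mem (Ideal.mul_mem_left _ _ (Ideal.subset_span ⟨v, rfl⟩))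
      (Ideal.mul_mem_right _ _ hp)

theorem ker_bind₁_eq_span_X_sub {σ : τ → MvPolynomial τ R}
    (hσ : ∀ v, bind₁ σ (σ v) = σ v) :
    RingHom.ker (bind₁ σ) = Ideal.span (Set.range fun v => X v - σ v) := by
  refine le_antisymm (fun p hp => ?_) (Ideal.span_le.mpr ?_)
  · simpa [RingHom.mem_ker.mp hp] using sub_bind₁_mem_span_X_sub σ p
  · rintro _ ⟨v, rfl⟩
    simp [RingHom.mem_ker, hσ]

theorem sub_bind₁_mem_ker {σ : τ → MvPolynomial τ R} (hσ : ∀ v, bind₁ σ (σ v) = σ v)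
    (p : MvPolynomial τ R) : p - bind₁ σ p ∈ RingHom.ker (bind₁ σ) := by
  rw [ker_bind₁_eq_span_X_sub hσ]
  exact sub_bind₁_mem_span_X_sub σ p

open Classical in
noncomputable def collapse (A : Set τ) (t v : τ) : MvPolynomial τ R :=
  if v ∈ A then X t else X v

variable {A : Set τ} {t v : τ}

theorem collapse_of_mem (hv : v ∈ A) : collapse A t v = (X t : MvPolynomial τ R) := by
  simp [collapse, hv]

theorem collapse_of_notMem (hv : v ∉ A) : collapse A t v = (X v : MvPolynomial τ R) := by
  simp [collapse, hv]

theorem bind₁_collapse_X_of_notMem (hv : v ∉ A) :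
    bind₁ (collapse A t) (X v : MvPolynomial τ R) = X v := by
  rw [bind₁_X_right, collapse_of_notMem hv]

theorem bind₁_collapse_collapse (ht : t ∉ A) (v : τ) :
    bind₁ (collapse A t) (collapse A t v) = (collapse A t v : MvPolynomial τ R) := by
  by_cases hv : v ∈ A
  · rw [collapse_of_mem hv, bind₁_collapse_X_of_notMem ht]
  · rw [collapse_of_notMem hv, bind₁_collapse_X_of_notMem hv]

theorem ker_bind₁_collapse (ht : t ∉ A) :
    RingHom.ker (bind₁ (collapse A t : τ → MvPolynomial τ R)) =
      Ideal.span ((fun v => X v - X t) '' A) := by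
  rw [ker_bind₁_eq_span_X_sub (bind₁_collapse_collapse ht)]
  refine le_antisymm (Ideal.span_le.mpr ?_) (Ideal.span_mono ?_)
  · rintro _ ⟨v, rfl⟩
    by_cases hv : v ∈ A
    · exact Ideal.subset_span ⟨v, hv, by simp only [collapse_of_mem hv]⟩
    · simp [collapse_of_notMem hv]
  · rintro _ ⟨v, hv, rfl⟩
    exact ⟨v, by simp only [collapse_of_mem hv]⟩

theorem prime_X_succ_sq_sub_X_zero_mul_X_succ [IsDomain R] [UniqueFactorizationMonoid R]
    {m : ℕ} {i j : Fin m} (hij : i ≠ j) :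
    Prime (X i.succ ^ 2 - X 0 * X j.succ : MvPolynomial (Fin (m + 1)) R) := by
  rw [← irreducible_iff_prime, ← MulEquiv.irreducible_iff (finSuccEquiv R m)]
  have image : finSuccEquiv R m (X i.succ ^ 2 - X 0 * X j.succ) =
      Polynomial.C (-X j) * Polynomial.X + Polynomial.C (X i ^ 2) := by
    simp only [map_sub, map_pow, map_mul, map_neg, finSuccEquiv_X_zero, finSuccEquiv_X_succ]
    ring
  have coprime : IsRelPrime (X j : MvPolynomial (Fin m) R) (X i ^ 2) :=
    X_prime.irreducible.isRelPrime_iff_not_dvd.mpr fun h =>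
      hij (X_dvd_X.mp (X_prime.dvd_of_dvd_pow h)).symm
  rw [image]
  exact Polynomial.irreducible_C_mul_X_add_C (neg_ne_zero.mpr (X_ne_zero j))
    fun d hd => coprime (dvd_neg.mp hd)

theorem not_dvd_X_of_irreducible_X_sq_sub [IsDomain R] {u v w : τ} (hvu : v ≠ u)
    (hF : Irreducible (X u ^ 2 - X v * X w : MvPolynomial τ R)) :
    ¬ (X u ^ 2 - X v * X w : MvPolynomial τ R) ∣ X v := by
  intro h
  have hv : (X v : MvPolynomial τ R) ∣ X u ^ 2 := by
    simpa using dvd_add (hF.dvd_symm X_prime.irreducible h) (dvd_mul_right (X v) (X w))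
  exact hvu (X_dvd_X.mp (X_prime.dvd_of_dvd_pow hv))

end MvPolynomial

namespace Diamond

variable {K : Type*} [Field K] {n : ℕ}

def yIndex (i : Fin n) : Fin (n + 2) := i.succ.castSucc

theorem yIndex_injective : Function.Injective (yIndex : Fin n → Fin (n + 2)) :=
  (Fin.castSucc_injective _).comp (Fin.succ_injective _)

theorem yIndex_ne_zero (i : Fin n) : yIndex i ≠ 0 := by
  simp [yIndex, Fin.ext_iff]

theorem yIndex_ne_last (i : Fin n) : yIndex i ≠ Fin.last (n + 1) :=
  Fin.castSucc_ne_last _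

theorem yP_eq_X (i : Fin n) : yP K n i = X (yIndex i) := rfl

def lastY (hn : 1 ≤ n) : Fin n := ⟨n - 1, by omega⟩

variable (hn : 1 ≤ n)

theorem le_lastY (k : Fin n) : k ≤ lastY hn := by
  rw [Fin.le_def]; exact Nat.le_sub_one_of_lt k.isLt

theorem colonSeq_of_lt {i : Fin n} (hi : i < lastY hn) :
    colonSeq K n hn i = yP K n i - yP K n (lastY hn) :=
  if_pos hi

theorem colonSeq_lastY :
    colonSeq K n hn (lastY hn) = yP K n (lastY hn) ^ 2 - xP K n * zP K n :=
  if_neg (lt_irrefl _)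

noncomputable def collapseBelow (k : Fin n) : Fin (n + 2) → MvPolynomial (Fin (n + 2)) K :=
  collapse (yIndex '' {j | j < k}) (yIndex (lastY hn))

theorem yIndex_notMem_image {k i : Fin n} (hki : k ≤ i) : yIndex i ∉ yIndex '' {j | j < k} := by
  rintro ⟨j, hj, hji⟩
  exact (lt_of_lt_of_le hj hki).ne (yIndex_injective hji)

theorem bind₁_collapseBelow_xP (k : Fin n) :
    bind₁ (collapseBelow (K := K) hn k) (xP K n) = xP K n :=
  bind₁_collapse_X_of_notMem fun ⟨j, _, hj⟩ => yIndex_ne_zero j hj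

theorem bind₁_collapseBelow_zP (k : Fin n) :
    bind₁ (collapseBelow (K := K) hn k) (zP K n) = zP K n :=
  bind₁_collapse_X_of_notMem fun ⟨j, _, hj⟩ => yIndex_ne_last j hj

theorem bind₁_collapseBelow_yP {k i : Fin n} (hki : k ≤ i) :
    bind₁ (collapseBelow (K := K) hn k) (yP K n i) = yP K n i :=
  bind₁_collapse_X_of_notMem (yIndex_notMem_image hki)

theorem bind₁_collapseBelow_colonSeq (k : Fin n) :
    bind₁ (collapseBelow hn k) (colonSeq K n hn k) = colonSeq K n hn k := by
  rcases (le_lastY hn k).lt_or_eq with hk | rfl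
  · rw [colonSeq_of_lt hn hk, map_sub, bind₁_collapseBelow_yP hn le_rfl,
      bind₁_collapseBelow_yP hn (le_lastY hn k)]
  · rw [colonSeq_lastY, map_sub, map_pow, map_mul, bind₁_collapseBelow_yP hn le_rfl,
      bind₁_collapseBelow_xP, bind₁_collapseBelow_zP]

theorem span_colonSeq_lt_eq_ker (k : Fin n) :
    Ideal.span (colonSeq K n hn '' {j | j < k}) = RingHom.ker (bind₁ (collapseBelow hn k)) := by
  rw [collapseBelow, ker_bind₁_collapse (yIndex_notMem_image (le_lastY hn k)), Set.image_image]
  exact congrArg _ <| Set.image_congr fun j hj =>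
    colonSeq_of_lt hn (lt_of_lt_of_le hj (le_lastY hn k))

theorem prime_colonSeq_lastY : Prime (colonSeq K n hn (lastY hn)) := by
  have h : colonSeq K n hn (lastY hn) =
      X (lastY hn).castSucc.succ ^ 2 - X 0 * X (Fin.last n).succ := by
    rw [colonSeq_lastY, yP_eq_X, yIndex, Fin.succ_castSucc]; rfl
  rw [h]
  exact prime_X_succ_sq_sub_X_zero_mul_X_succ (Fin.castSucc_lt_last _).ne

theorem colonSeq_ne_zero (k : Fin n) : colonSeq K n hn k ≠ 0 := by
  rcases (le_lastY hn k).lt_or_eq with hk | rfl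
  · rw [colonSeq_of_lt hn hk, sub_ne_zero]
    exact (X_injective.comp yIndex_injective).ne hk.ne
  · exact (prime_colonSeq_lastY hn).ne_zero

theorem dvd_of_colonSeq_lastY_dvd_mul_xP_mul_zP {p : MvPolynomial (Fin (n + 2)) K}
    (h : colonSeq K n hn (lastY hn) ∣ p * (xP K n * zP K n)) :
    colonSeq K n hn (lastY hn) ∣ p := by
  have hF := prime_colonSeq_lastY (K := K) hn
  rw [colonSeq_lastY] at hF h ⊢
  have hx : ¬ yP K n (lastY hn) ^ 2 - xP K n * zP K n ∣ xP K n :=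
    not_dvd_X_of_irreducible_X_sq_sub (yIndex_ne_zero _).symm hF.irreducible
  have hz : ¬ yP K n (lastY hn) ^ 2 - xP K n * zP K n ∣ zP K n := by
    rw [mul_comm] at hF ⊢
    exact not_dvd_X_of_irreducible_X_sq_sub (yIndex_ne_last _).symm hF.irreducible
  exact (hF.dvd_or_dvd h).resolve_right fun hxz => (hF.dvd_or_dvd hxz).elim hx hz

theorem yP_sub_yP_lastY_mem (a : Fin n) :
    yP K n a - yP K n (lastY hn) ∈ Ideal.span (Set.range (colonSeq K n hn)) := by
  rcases (le_lastY hn a).lt_or_eq with ha | rfl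
  · exact Ideal.subset_span ⟨a, colonSeq_of_lt hn ha⟩
  · rw [sub_self]
    exact zero_mem _

theorem diamondIdeal_le_span_colonSeq :
    diamondIdeal K n ≤ Ideal.span (Set.range (colonSeq K n hn)) := by
  refine Ideal.span_le.mpr ?_
  rintro _ ⟨a, b, -, rfl⟩
  have key : yP K n a * yP K n b - xP K n * zP K n =
      yP K n a * (yP K n b - yP K n (lastY hn)) +
        yP K n (lastY hn) * (yP K n a - yP K n (lastY hn)) + colonSeq K n hn (lastY hn) := by
    rw [colonSeq_lastY]; ring
  rw [SetLike.mem_coe, key]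
  exact add_mem (add_mem (Ideal.mul_mem_left _ _ (yP_sub_yP_lastY_mem hn b))
    (Ideal.mul_mem_left _ _ (yP_sub_yP_lastY_mem hn a))) (Ideal.subset_span ⟨_, rfl⟩)

theorem yP_mul_yP_sub_mem_diamondIdeal {a b : Fin n} (hab : a ≠ b) :
    yP K n a * yP K n b - xP K n * zP K n ∈ diamondIdeal K n := by
  rcases hab.lt_or_gt with h | h
  · exact Ideal.subset_span ⟨a, b, h, rfl⟩
  · exact Ideal.subset_span ⟨b, a, h, by ring⟩

theorem colonSeq_mul_xP_mul_zP_mem (h3 : 3 ≤ n) (k : Fin n) :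
    colonSeq K n hn k * (xP K n * zP K n) ∈ diamondIdeal K n := by
  set x := xP K n
  set z := zP K n
  set y := yP K n
  set l := lastY hn
  -- modulo `I`, `xz` may be traded for any `y_a y_b` with `a ≠ b`
  rcases (le_lastY hn k).lt_or_eq with hk | rfl
  · obtain ⟨b, hbk, hbl⟩ := Fin.exists_ne_and_ne_of_two_lt k l (by omega)
    have key : colonSeq K n hn k * (x * z) =
        y l * (y k * y b - x * z) - y k * (y b * y l - x * z) := by
      rw [colonSeq_of_lt hn hk]; ring
    rw [key]
    exact sub_mem (Ideal.mul_mem_left _ _ (yP_mul_yP_sub_mem_diamondIdeal hbk.symm))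
      (Ideal.mul_mem_left _ _ (yP_mul_yP_sub_mem_diamondIdeal hbl))
  · obtain ⟨a, hal⟩ : ∃ a, a ≠ l :=
      ⟨⟨0, by omega⟩, by simp [l, lastY, Fin.ext_iff]; omega⟩
    obtain ⟨b, hba, hbl⟩ := Fin.exists_ne_and_ne_of_two_lt a l (by omega)
    have key : colonSeq K n hn l * (x * z) =
        (y a * y l - x * z) * (y b * y l - x * z) - y l ^ 2 * (y a * y b - x * z) +
          x * z * (y a * y l - x * z) + x * z * (y b * y l - x * z) := by
      rw [colonSeq_lastY]; ring
    have hgal := yP_mul_yP_sub_mem_diamondIdeal (K := K) hal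
    have hgbl := yP_mul_yP_sub_mem_diamondIdeal (K := K) hbl
    have hgab := yP_mul_yP_sub_mem_diamondIdeal (K := K) hba.symm
    rw [key]
    exact add_mem (add_mem (sub_mem (Ideal.mul_mem_left _ _ hgbl) (Ideal.mul_mem_left _ _ hgab))
      (Ideal.mul_mem_left _ _ hgal)) (Ideal.mul_mem_left _ _ hgbl)

theorem span_colonSeq_eq_comap :
    Ideal.span (Set.range (colonSeq K n hn)) =
      Ideal.comap (bind₁ (collapseBelow hn (lastY hn)))
        (Ideal.span {colonSeq K n hn (lastY hn)}) := by
  refine le_antisymm (Ideal.span_le.mpr ?_) fun s hs => ?_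
  · rintro _ ⟨k, rfl⟩
    rcases (le_lastY hn k).lt_or_eq with hk | rfl
    · have hker : colonSeq K n hn k ∈ RingHom.ker (bind₁ (collapseBelow hn (lastY hn))) := by
        rw [← span_colonSeq_lt_eq_ker]
        exact Ideal.subset_span ⟨k, hk, rfl⟩
      simp [RingHom.mem_ker.mp hker]
    · simp [bind₁_collapseBelow_colonSeq]
  · have hker := sub_bind₁_mem_ker (σ := collapseBelow hn (lastY hn))
      (bind₁_collapse_collapse (yIndex_notMem_image le_rfl)) s
    rw [← span_colonSeq_lt_eq_ker] at hker
    rw [← sub_add_cancel s (bind₁ (collapseBelow hn (lastY hn)) s)]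
    refine add_mem (Ideal.span_mono (Set.image_subset_range _ _) hker) ?_
    exact Ideal.span_mono (Set.singleton_subset_iff.mpr (Set.mem_range_self _)) hs

theorem colon_diamondIdeal_xP_mul_zP (h3 : 3 ≤ n) :
    (diamondIdeal K n).colon (Ideal.span {xP K n * zP K n}) =
      Ideal.span (Set.range (colonSeq K n hn)) := by
  refine le_antisymm (fun s hs => ?_) (Ideal.span_le.mpr ?_)
  · have hJ := diamondIdeal_le_span_colonSeq hn (Ideal.mem_colon_span_singleton.mp hs)
    rw [span_colonSeq_eq_comap, Ideal.mem_comap, Ideal.mem_span_singleton, map_mul, map_mul,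
      bind₁_collapseBelow_xP, bind₁_collapseBelow_zP] at hJ
    rw [span_colonSeq_eq_comap, Ideal.mem_comap, Ideal.mem_span_singleton]
    exact dvd_of_colonSeq_lastY_dvd_mul_xP_mul_zP hn hJ
  · rintro _ ⟨k, rfl⟩
    exact Ideal.mem_colon_span_singleton.mpr (colonSeq_mul_xP_mul_zP_mem hn h3 k)

theorem isRegSeq_colonSeq : IsRegSeq (colonSeq K n hn) := by
  refine ⟨fun k s hs => ?_, ?_⟩
  · rw [span_colonSeq_lt_eq_ker, RingHom.mem_ker, map_mul, bind₁_collapseBelow_colonSeq] at hs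
    rw [span_colonSeq_lt_eq_ker, RingHom.mem_ker]
    exact (mul_eq_zero.mp hs).resolve_left (colonSeq_ne_zero hn k)
  · rw [span_colonSeq_eq_comap]
    exact Ideal.comap_ne_top _ (Ideal.span_singleton_ne_top (prime_colonSeq_lastY hn).not_isUnit)

end Diamond

theorem diamond_colon_xz (K : Type*) [Field K] (n : ℕ) (hn : 3 ≤ n) :
    Submodule.colon (diamondIdeal K n) (Ideal.span {xP K n * zP K n}) =
        Ideal.span (Set.range (colonSeq K n (by omega))) ∧
      IsRegSeq (colonSeq K n (by omega)) :=
  ⟨Diamond.colon_diamondIdeal_xP_mul_zP _ hn, Diamond.isRegSeq_colonSeq _⟩
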